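/- arXiv:2405.19470 — 3 statements merged into one kernel-verified Lean document; each statement's English description precedes it below -/
import Mathlib

section
/- For N ∈ ℕ, let F_N ⊂ ℤ₂ be the set of 2-adic integers whose binary digit sequence never contains more than N consecutive equal digits (zeros or ones). Define κ(ϰ) ∈ ℤ₂ to have n-th binary digit equal to the 0-th binary digit of ŝⁿϰ, where ŝ is the modified shift. Then ϰ ∈ F_N implies κ(ϰ) ∈ F_{N+1}. -/
/-! Since `2 * ŝ κ = κ + ε₀(κ)`, where `ε₀(κ)` is the lowest binary digit of `κ`, induction gives
`2ⁿ ŝⁿ x = x + (κ(x) mod 2ⁿ)`, so `κ(x) = -x`. The binary addition `x + κ(x) = 0` then has carries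
`cₙ ∈ {0, 1}` with `xₙ + κₙ + cₙ = 2 cₙ₊₁`. A run of `N + 2` equal digits of `κ(x)` starting at
position `m` forces either `c_{m+1} = 0`, and then `x` has `N + 1` zeros from position `m` on, or
`c_{m+1} = 1`, and then the carry stays `1` and `x` has `N + 1` complementary digits from
position `m + 1` on. -/

/-- `x ∈ F_N`: among any `N+1` consecutive binary digits of `x` (positions `m, …, m+N`),
not all are equal, i.e. `x` has at most `N` consecutive equal digits. -/
def ConsecBound (ε : ℤ_[2] → ℕ → ℕ) (N : ℕ) (x : ℤ_[2]) : Prop :=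
  ∀ m : ℕ, ∃ i ≤ N, ∃ j ≤ N, ε x (m + i) ≠ ε x (m + j)

open Finset

namespace PadicInt

variable {p : ℕ} [Fact p.Prime]

theorem summable_natCast_mul_pow (d : ℕ → ℕ) :
    Summable fun k => (d k : ℤ_[p]) * (p : ℤ_[p]) ^ k := by
  have hp : Filter.Tendsto (fun k => ‖(p : ℤ_[p]) ^ k‖) Filter.atTop (nhds 0) := by
    simpa using (tendsto_pow_atTop_nhds_zero_of_norm_lt_one
      ((norm_lt_one_iff_dvd (p : ℤ_[p])).2 dvd_rfl)).norm
  refine NonarchimedeanAddGroup.summable_of_tendsto_cofinite_zero ?_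
  rw [Nat.cofinite_eq_atTop]
  refine squeeze_zero_norm (fun k => ?_) hp
  rw [norm_mul]
  exact mul_le_of_le_one_left (norm_nonneg _) (norm_le_one _)

theorem pow_dvd_tsum_sub_sum_range (d : ℕ → ℕ) (n : ℕ) :
    (p : ℤ_[p]) ^ n ∣
      (∑' k, (d k : ℤ_[p]) * (p : ℤ_[p]) ^ k) - ∑ k ∈ range n, (d k : ℤ_[p]) * (p : ℤ_[p]) ^ k := by
  refine ⟨∑' k, (d (k + n) : ℤ_[p]) * (p : ℤ_[p]) ^ k, ?_⟩
  rw [← (summable_natCast_mul_pow d).sum_add_tsum_nat_add n, add_sub_cancel_left,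
    ← (summable_natCast_mul_pow _).tsum_mul_left]
  exact tsum_congr fun k => by ring

theorem natCast_pow_dvd_natCast_iff (n m : ℕ) :
    (p : ℤ_[p]) ^ n ∣ (m : ℤ_[p]) ↔ p ^ n ∣ m := by
  have := pow_p_dvd_int_iff (p := p) n m
  push_cast at this
  exact_mod_cast this

theorem eq_of_dvd_natCast_sub {r e : ℕ} (hr : r < p) (he : e < p)
    (h : (p : ℤ_[p]) ∣ (r : ℤ_[p]) - e) : r = e := by
  have hint : (p : ℤ) ∣ (r : ℤ) - e := by
    simpa using (pow_p_dvd_int_iff (p := p) 1 ((r : ℤ) - e)).1 (by simpa using h)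
  have := Int.eq_zero_of_abs_lt_dvd hint (by rw [abs_lt]; omega)
  omega

end PadicInt

theorem pow_mul_iterate_eq {R : Type*} [CommSemiring R] {c : R} {f d : R → R}
    (hf : ∀ y, c * f y = y + d y) (x : R) (n : ℕ) :
    c ^ n * f^[n] x = x + ∑ k ∈ range n, d (f^[k] x) * c ^ k := by
  induction n with
  | zero => simp
  | succ n ih =>
    rw [Function.iterate_succ_apply', sum_range_succ, pow_succ, mul_assoc, hf, mul_add, ih]
    ring

section BinaryCarry

def binaryCarry (a b : ℕ → ℕ) (n : ℕ) : ℕ :=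
  (∑ k ∈ range n, (a k + b k) * 2 ^ k) / 2 ^ n

theorem binaryCarry_zero (a b : ℕ → ℕ) : binaryCarry a b 0 = 0 := by
  simp [binaryCarry]

theorem binaryCarry_step {a b : ℕ → ℕ}
    (h : ∀ n, 2 ^ n ∣ ∑ k ∈ range n, (a k + b k) * 2 ^ k) (n : ℕ) :
    a n + b n + binaryCarry a b n = 2 * binaryCarry a b (n + 1) := by
  obtain ⟨q, hq⟩ := h n
  obtain ⟨q', hq'⟩ := h (n + 1)
  have hrec : 2 ^ n * (a n + b n + q) = 2 ^ n * (2 * q') := by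
    rw [sum_range_succ, hq, pow_succ] at hq'
    linarith
  unfold binaryCarry
  rw [hq, hq', Nat.mul_div_cancel_left _ (by positivity), Nat.mul_div_cancel_left _ (by positivity)]
  exact Nat.eq_of_mul_eq_mul_left (by positivity) hrec

variable {a b c : ℕ → ℕ}

theorem carry_le_one (ha : ∀ n, a n ≤ 1) (hb : ∀ n, b n ≤ 1)
    (hstep : ∀ n, a n + b n + c n = 2 * c (n + 1)) (h0 : c 0 = 0) (n : ℕ) : c n ≤ 1 := by
  induction n with
  | zero => omega
  | succ n ih => have := hstep n; have := ha n; have := hb n; omega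

theorem carry_eq_one_of_le (hstep : ∀ n, a n + b n + c n = 2 * c (n + 1))
    (hc : ∀ n, c n ≤ 1) {k : ℕ} (hk : c k = 1) {n : ℕ} (hkn : k ≤ n) : c n = 1 := by
  induction n, hkn using Nat.le_induction with
  | base => exact hk
  | succ n _ ih => have := hstep n; have := hc (n + 1); omega

theorem eq_zero_of_carry_eq_zero (ha : ∀ n, a n ≤ 1)
    (hstep : ∀ n, a n + b n + c n = 2 * c (n + 1)) {m L : ℕ} (hc : c m = 0)
    (hb : ∀ t ≤ L, b (m + t) = 0) : ∀ t ≤ L, a (m + t) = 0 := by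
  have hcarry : ∀ t ≤ L + 1, c (m + t) = 0 := by
    intro t
    induction t with
    | zero => exact fun _ => hc
    | succ t ih =>
      intro ht
      have := ih (by omega); have := hstep (m + t); have := ha (m + t); have := hb t (by omega)
      show c (m + t + 1) = 0
      omega
  intro t ht
  have := hcarry t (by omega); have := hb t ht; have := hstep (m + t)
  have : c (m + t + 1) = 0 := hcarry (t + 1) (by omega)
  omega

theorem no_long_run_of_add_eq_zero (ha : ∀ n, a n ≤ 1) (hb : ∀ n, b n ≤ 1) (h0 : c 0 = 0)
    (hstep : ∀ n, a n + b n + c n = 2 * c (n + 1)) {N : ℕ}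
    (hfree : ∀ m, ∃ i ≤ N, ∃ j ≤ N, a (m + i) ≠ a (m + j)) (m : ℕ) :
    ∃ i ≤ N + 1, ∃ j ≤ N + 1, b (m + i) ≠ b (m + j) := by
  by_contra! hrun
  have hconst : ∀ t ≤ N + 1, b (m + t) = b m := fun t ht => hrun t ht 0 (Nat.zero_le _)
  have hc := carry_le_one ha hb hstep h0
  rcases Nat.le_one_iff_eq_zero_or_eq_one.1 (hc (m + 1)) with h1 | h1
  · have hm := hstep m
    have hbm : b m = 0 := by omega
    have hzero := eq_zero_of_carry_eq_zero ha hstep (m := m) (L := N) (by omega)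
      fun t ht => by rw [hconst t (by omega), hbm]
    obtain ⟨i, hi, j, hj, hne⟩ := hfree m
    exact hne (by rw [hzero i hi, hzero j hj])
  · have hcompl : ∀ t ≤ N, a (m + 1 + t) = 1 - b m := by
      intro t ht
      have := hstep (m + 1 + t)
      have := carry_eq_one_of_le hstep hc h1 (n := m + 1 + t) (by omega)
      have := carry_eq_one_of_le hstep hc h1 (n := m + 1 + t + 1) (by omega)
      have := hconst (1 + t) (by omega)
      rw [← add_assoc] at this; omega
    obtain ⟨i, hi, j, hj, hne⟩ := hfree (m + 1)
    exact hne (by rw [hcompl i hi, hcompl j hj])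

end BinaryCarry

section DigitExpansion

variable {ε : ℤ_[2] → ℕ → ℕ}

theorem two_pow_dvd_sub_sum_digits
    (hdig : ∀ x : ℤ_[2], (∀ k, ε x k ≤ 1) ∧ x = ∑' k : ℕ, (ε x k : ℤ_[2]) * 2 ^ k)
    (y : ℤ_[2]) (n : ℕ) : (2 : ℤ_[2]) ^ n ∣ y - ∑ k ∈ range n, (ε y k : ℤ_[2]) * 2 ^ k := by
  have := PadicInt.pow_dvd_tsum_sub_sum_range (p := 2) (ε y) n
  rwa [Nat.cast_ofNat, ← (hdig y).2] at this

theorem two_mul_shat_eq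
    (hdig : ∀ x : ℤ_[2], (∀ k, ε x k ≤ 1) ∧ x = ∑' k : ℕ, (ε x k : ℤ_[2]) * 2 ^ k)
    {s shat : ℤ_[2] → ℤ_[2]} (hs : ∀ κ, κ = 2 * s κ ∨ κ = 1 + 2 * s κ)
    (hshat : ∀ κ, (κ = 2 * s κ → shat κ = s κ) ∧ (κ = 1 + 2 * s κ → shat κ = 1 + s κ))
    (κ : ℤ_[2]) : 2 * shat κ = κ + ε κ 0 := by
  have hpar : (2 : ℤ_[2]) ∣ κ - ε κ 0 := by simpa using two_pow_dvd_sub_sum_digits hdig κ 1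
  have hlast (r : ℕ) (hr : r ≤ 1) (hκ : κ = r + 2 * s κ) : ε κ 0 = r := by
    refine (PadicInt.eq_of_dvd_natCast_sub (p := 2) (by omega) (by have := (hdig κ).1 0; omega)
      ?_).symm
    rw [Nat.cast_ofNat, ← dvd_add_left (dvd_mul_right 2 (s κ))]
    convert hpar using 1
    linear_combination -hκ
  rcases hs κ with h | h
  · rw [(hshat κ).1 h, hlast 0 zero_le_one (by simpa using h)]
    linear_combination -h
  · rw [(hshat κ).2 h, hlast 1 le_rfl (by simpa using h)]
    linear_combination -h

end DigitExpansion

theorem stmt5 (ε : ℤ_[2] → ℕ → ℕ)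
    (hdig : ∀ x : ℤ_[2], (∀ k, ε x k ≤ 1) ∧ x = ∑' k : ℕ, (ε x k : ℤ_[2]) * 2 ^ k)
    (s shat : ℤ_[2] → ℤ_[2]) (hs : ∀ κ, κ = 2 * s κ ∨ κ = 1 + 2 * s κ)
    (hshat : ∀ κ, (κ = 2 * s κ → shat κ = s κ) ∧ (κ = 1 + 2 * s κ → shat κ = 1 + s κ))
    (x kx : ℤ_[2]) (hkx : ∀ n : ℕ, ε kx n = ε (shat^[n] x) 0)
    (N : ℕ) (hx : ConsecBound ε N x) : ConsecBound ε (N + 1) kx := by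
  have hiter (n : ℕ) : 2 ^ n * shat^[n] x = x + ∑ k ∈ range n, (ε kx k : ℤ_[2]) * 2 ^ k := by
    simp_rw [hkx]
    exact pow_mul_iterate_eq (two_mul_shat_eq hdig hs hshat) x n
  have hdvd (n : ℕ) : 2 ^ n ∣ ∑ k ∈ range n, (ε x k + ε kx k) * 2 ^ k := by
    rw [← PadicInt.natCast_pow_dvd_natCast_iff (p := 2), Nat.cast_ofNat]
    convert dvd_sub (Dvd.intro _ (hiter n)) (two_pow_dvd_sub_sum_digits hdig x n) using 1
    push_cast
    simp only [add_mul, sum_add_distrib]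
    ring
  exact no_long_run_of_add_eq_zero (fun n => (hdig x).1 n) (fun n => (hdig kx).1 n)
    (binaryCarry_zero _ _) (binaryCarry_step hdvd) hx
end

section
/- Let λ > 2 and a : ℤ₂ → ℝ≥0 satisfy a_{2κ}² + a_{2κ+1}² = λ, a_{2κ+1}² a_{2κ+2}² = a_{κ+1}², and a_κ² ≤ 1 for even κ. Then for every odd κ' ∈ ℤ₂ and every n ≥ 0, a_{2ⁿκ'}² ≥ (λ-1)/λⁿ. Consequently, if ϰ ∈ F_N (at most N consecutive equal binary digits) and ϰ ≠ 0, then a_ϰ² ≥ (λ-1)/λ^N. -/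
section JacobiRecurrence

variable {R : Type*} [CommRing R] {a : R → ℝ} {lam : ℝ}

theorem sq_le_mul_sq_two_mul (h1 : ∀ κ, a (2 * κ) ^ 2 + a (2 * κ + 1) ^ 2 = lam)
    (h2 : ∀ κ, a (2 * κ + 1) ^ 2 * a (2 * κ + 2) ^ 2 = a (κ + 1) ^ 2) (y : R) :
    a y ^ 2 ≤ lam * a (2 * y) ^ 2 := by
  have hprod := h2 (y - 1)
  rw [show 2 * (y - 1) + 2 = 2 * y by ring, sub_add_cancel] at hprod
  nlinarith [h1 (y - 1), mul_nonneg (sq_nonneg (a (2 * (y - 1)))) (sq_nonneg (a (2 * y)))]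

theorem div_pow_le_sq_two_pow_mul_odd (hlam : 0 < lam)
    (h1 : ∀ κ, a (2 * κ) ^ 2 + a (2 * κ + 1) ^ 2 = lam)
    (h2 : ∀ κ, a (2 * κ + 1) ^ 2 * a (2 * κ + 2) ^ 2 = a (κ + 1) ^ 2)
    (h3 : ∀ m, a (2 * m) ^ 2 ≤ 1) (m : R) (n : ℕ) :
    (lam - 1) / lam ^ n ≤ a (2 ^ n * (2 * m + 1)) ^ 2 := by
  induction n with
  | zero => simpa using (by linarith [h1 m, h3 m] : lam - 1 ≤ a (2 * m + 1) ^ 2)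
  | succ n ih =>
    calc (lam - 1) / lam ^ (n + 1) = (lam - 1) / lam ^ n / lam := by rw [pow_succ, div_div]
      _ ≤ a (2 ^ n * (2 * m + 1)) ^ 2 / lam := by gcongr
      _ ≤ a (2 ^ (n + 1) * (2 * m + 1)) ^ 2 := by
        rw [div_le_iff₀' hlam, pow_succ' (2 : R), mul_assoc]
        exact sq_le_mul_sq_two_mul h1 h2 _

end JacobiRecurrence

theorem Nat.sum_range_mul_pow_lt {b : ℕ} {d : ℕ → ℕ} (hd : ∀ k, d k < b) (M : ℕ) :
    ∑ k ∈ Finset.range M, d k * b ^ k < b ^ M := by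
  induction M with
  | zero => simp
  | succ M ih =>
    rw [Finset.sum_range_succ, pow_succ]
    nlinarith [Nat.mul_le_mul_right (b ^ M) (hd M)]

namespace PadicInt

variable {p : ℕ} [Fact p.Prime]

theorem summable_mul_pow (c : ℕ → ℤ_[p]) : Summable fun k ↦ c k * (p : ℤ_[p]) ^ k := by
  have hp : (p : ℝ)⁻¹ < 1 := inv_lt_one_of_one_lt₀ (mod_cast (Fact.out : p.Prime).one_lt)
  refine .of_norm_bounded (summable_geometric_of_lt_one (by positivity) hp) fun k ↦ ?_
  rw [norm_mul, norm_pow, norm_p]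
  exact mul_le_of_le_one_left (by positivity) (norm_le_one _)

theorem digit_eq_zero_of_pow_dvd_tsum {d : ℕ → ℕ} (hd : ∀ k, d k < p) {M : ℕ}
    (hdvd : (p : ℤ_[p]) ^ M ∣ ∑' k, (d k : ℤ_[p]) * (p : ℤ_[p]) ^ k) {k : ℕ} (hk : k < M) :
    d k = 0 := by
  have hsplit := (summable_mul_pow fun k ↦ (d k : ℤ_[p])).sum_add_tsum_nat_add M
  have htail : ∑' i, (d (i + M) : ℤ_[p]) * (p : ℤ_[p]) ^ (i + M)
      = (p : ℤ_[p]) ^ M * ∑' i, (d (i + M) : ℤ_[p]) * (p : ℤ_[p]) ^ i := by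
    rw [← (summable_mul_pow _).tsum_mul_left]
    congr 1 with i
    ring
  have hhead : (p : ℤ_[p]) ^ M ∣ ((∑ i ∈ Finset.range M, d i * p ^ i : ℕ) : ℤ) := by
    push_cast
    rw [← sub_eq_iff_eq_add.mpr hsplit.symm, htail]
    exact dvd_sub hdvd (dvd_mul_right _ _)
  have hzero := Nat.eq_zero_of_dvd_of_lt (mod_cast (pow_p_dvd_int_iff M _).mp hhead)
    (Nat.sum_range_mul_pow_lt hd M)
  have hterm := Finset.sum_eq_zero_iff.mp hzero k (Finset.mem_range.mpr hk)
  simpa [(Fact.out : p.Prime).ne_zero] using hterm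

theorem exists_eq_two_mul_add_one_of_isUnit {u : ℤ_[2]} (hu : IsUnit u) :
    ∃ m, u = 2 * m + 1 := by
  have hrepr : u.zmodRepr = 1 := by
    have hlt := zmodRepr_lt_p u
    have hne : u.zmodRepr ≠ 0 := by
      rw [Ne, zmodRepr_eq_zero_iff_dvd, ← norm_lt_one_iff_dvd, ← not_isUnit_iff, not_not]
      exact hu
    omega
  obtain ⟨m, hm⟩ := Ideal.mem_span_singleton'.mp
    (maximalIdeal_eq_span_p (p := 2) ▸ sub_zmodRepr_mem u)
  exact ⟨m, by rw [hrepr] at hm; push_cast at hm; linear_combination -hm⟩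

theorem exists_eq_pow_mul_isUnit_of_not_pow_dvd {x : ℤ_[p]} {N : ℕ}
    (hx : ¬ (p : ℤ_[p]) ^ (N + 1) ∣ x) : ∃ n ≤ N, ∃ u, IsUnit u ∧ x = (p : ℤ_[p]) ^ n * u := by
  have hx0 : x ≠ 0 := by rintro rfl; exact hx (dvd_zero _)
  refine ⟨x.valuation, ?_, _, (unitCoeff hx0).isUnit, by rw [mul_comm]; exact unitCoeff_spec hx0⟩
  by_contra! h
  exact hx ((pow_dvd_pow _ h).trans (Dvd.intro_left _ (unitCoeff_spec hx0).symm))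

end PadicInt

theorem not_two_pow_dvd_of_consecBound {ε : ℤ_[2] → ℕ → ℕ} {N : ℕ} {x : ℤ_[2]}
    (hdig : (∀ k, ε x k ≤ 1) ∧ x = ∑' k : ℕ, (ε x k : ℤ_[2]) * 2 ^ k) (hx : ConsecBound ε N x) :
    ¬ (2 : ℤ_[2]) ^ (N + 1) ∣ x := by
  intro hdvd
  have hzero : ∀ k ≤ N, ε x k = 0 := fun k hk ↦
    PadicInt.digit_eq_zero_of_pow_dvd_tsum (p := 2) (fun k ↦ Nat.lt_succ_of_le (hdig.1 k))
      (by simpa [← hdig.2] using hdvd) (Nat.lt_succ_of_le hk)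
  obtain ⟨i, hi, j, hj, hij⟩ := hx 0
  simp only [zero_add, hzero i hi, hzero j hj] at hij
  exact hij rfl

theorem exists_eq_two_pow_mul_odd_of_consecBound {ε : ℤ_[2] → ℕ → ℕ} {N : ℕ} {x : ℤ_[2]}
    (hdig : (∀ k, ε x k ≤ 1) ∧ x = ∑' k : ℕ, (ε x k : ℤ_[2]) * 2 ^ k) (hx : ConsecBound ε N x) :
    ∃ n ≤ N, ∃ m, x = 2 ^ n * (2 * m + 1) := by
  obtain ⟨n, hn, u, hu, rfl⟩ := PadicInt.exists_eq_pow_mul_isUnit_of_not_pow_dvd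
    (p := 2) (by exact_mod_cast not_two_pow_dvd_of_consecBound hdig hx)
  obtain ⟨m, rfl⟩ := PadicInt.exists_eq_two_mul_add_one_of_isUnit hu
  exact ⟨n, hn, m, by push_cast; rfl⟩

theorem stmt9_general (lam : ℝ) (hlam : 2 < lam)
    (ε : ℤ_[2] → ℕ → ℕ)
    (hdig : ∀ x : ℤ_[2], (∀ k, ε x k ≤ 1) ∧ x = ∑' k : ℕ, (ε x k : ℤ_[2]) * 2 ^ k)
    (a : ℤ_[2] → ℝ)
    (h1 : ∀ κ : ℤ_[2], a (2 * κ) ^ 2 + a (2 * κ + 1) ^ 2 = lam)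
    (h2 : ∀ κ : ℤ_[2], a (2 * κ + 1) ^ 2 * a (2 * κ + 2) ^ 2 = a (κ + 1) ^ 2)
    (h3 : ∀ κ : ℤ_[2], (∃ m, κ = 2 * m) → a κ ^ 2 ≤ 1) :
    (∀ κ' : ℤ_[2], (∃ m, κ' = 2 * m + 1) →
      ∀ n : ℕ, (lam - 1) / lam ^ n ≤ a ((2 : ℤ_[2]) ^ n * κ') ^ 2) ∧
    (∀ N : ℕ, ∀ x : ℤ_[2], ConsecBound ε N x → x ≠ 0 →
      (lam - 1) / lam ^ N ≤ a x ^ 2) := by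
  have odd_bound := div_pow_le_sq_two_pow_mul_odd (by linarith) h1 h2 fun m ↦ h3 _ ⟨m, rfl⟩
  refine ⟨fun κ' ⟨m, hm⟩ n ↦ hm ▸ odd_bound m n, fun N x hx _ ↦ ?_⟩
  obtain ⟨n, hn, m, rfl⟩ := exists_eq_two_pow_mul_odd_of_consecBound (hdig x) hx
  calc (lam - 1) / lam ^ N ≤ (lam - 1) / lam ^ n :=
        div_le_div_of_nonneg_left (by linarith) (by positivity) (pow_le_pow_right₀ (by linarith) hn)
    _ ≤ a (2 ^ n * (2 * m + 1)) ^ 2 := odd_bound m n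

theorem stmt9 (lam : ℝ) (hlam : 2 < lam)
    (ε : ℤ_[2] → ℕ → ℕ)
    (hdig : ∀ x : ℤ_[2], (∀ k, ε x k ≤ 1) ∧ x = ∑' k : ℕ, (ε x k : ℤ_[2]) * 2 ^ k)
    (a : ℤ_[2] → ℝ) (ha : ∀ κ, 0 ≤ a κ)
    (h1 : ∀ κ : ℤ_[2], a (2 * κ) ^ 2 + a (2 * κ + 1) ^ 2 = lam)
    (h2 : ∀ κ : ℤ_[2], a (2 * κ + 1) ^ 2 * a (2 * κ + 2) ^ 2 = a (κ + 1) ^ 2)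
    (h3 : ∀ κ : ℤ_[2], (∃ m, κ = 2 * m) → a κ ^ 2 ≤ 1) :
    (∀ κ' : ℤ_[2], (∃ m, κ' = 2 * m + 1) →
      ∀ n : ℕ, (lam - 1) / lam ^ n ≤ a ((2 : ℤ_[2]) ^ n * κ') ^ 2) ∧
    (∀ N : ℕ, ∀ x : ℤ_[2], ConsecBound ε N x → x ≠ 0 →
      (lam - 1) / lam ^ N ≤ a x ^ 2) :=
  stmt9_general lam hlam ε hdig a h1 h2 h3
end

section
/- Let λ > 2, T(x) = x² − λ, ξ = (1+√(1+4λ))/2. The function x ↦ w_x^0 = 1/(x+λ) is strictly decreasing on [-ξ,ξ], while for every k ≥ 1 the function x ↦ w_x^k = 2^{-k} ∑_{T^{∘k}(y)=x} 1/(y+λ) is nondecreasing on [-ξ,ξ]. -/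
/-!
Write `T z = z² - λ`. Pairing the two preimages `±√(u + λ)` of `u`,
`1/(√(u+λ) - a) + 1/(-√(u+λ) - a) = 2a / (u - T a)`, so summing `1/(y - a)` over the
`2^k` preimages `y` of `x` under `T^[k]` gives `2^k · a · T a ⋯ T^[k-1] a / (x - T^[k] a)`,
as long as the orbit of `a` stays outside `[-ξ, ξ]`, the invariant interval of the
branches. For `a = -λ` the first factor is negative and all later ones exceed `ξ`, so
`w^k` is a negative multiple of `1/(x - T^[k] (-λ))` with a pole to the right of `ξ`.
-/

/-- Signed iterated preimage of `x` under `T(z) = z² - lam`: each Boolean chooses a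
branch `± √(· + lam)`, so that `T^[s.length] (pre lam s x) = x`. -/
noncomputable def pre (lam : ℝ) : List Bool → ℝ → ℝ
  | [], x => x
  | b :: t, x => (if b then 1 else -1) * Real.sqrt (pre lam t x + lam)

open Finset

noncomputable def quadMap (lam z : ℝ) : ℝ := z ^ 2 - lam

lemma inv_sub_add_inv_neg_sub {s a : ℝ} (h : s ^ 2 ≠ a ^ 2) :
    (s - a)⁻¹ + (-s - a)⁻¹ = 2 * a * (s ^ 2 - a ^ 2)⁻¹ := by
  have h₁ : s - a ≠ 0 := fun h' => h (by rw [sub_eq_zero.mp h'])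
  have h₂ : -s - a ≠ 0 := fun h' => h (by rw [← neg_sq, neg_eq_of_add_eq_zero_left (by linarith)])
  field_simp
  ring

lemma sum_pre_ofFn_succ (lam x : ℝ) (k : ℕ) (f : ℝ → ℝ) :
    ∑ s : Fin (k + 1) → Bool, f (pre lam (List.ofFn s) x)
      = ∑ t : Fin k → Bool, (f (√(pre lam (List.ofFn t) x + lam))
          + f (-√(pre lam (List.ofFn t) x + lam))) := by
  rw [← (Fin.consEquiv fun _ => Bool).sum_comp, Fintype.sum_prod_type, Fintype.sum_bool,
    ← sum_add_distrib]
  simp [pre, List.ofFn_succ]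

section InvariantInterval

variable {lam xi : ℝ} (hfix : xi ^ 2 = xi + lam) (hxi : 0 ≤ xi)
include hfix hxi

lemma pre_mem_Icc (l : List Bool) {x : ℝ} (hx : x ∈ Set.Icc (-xi) xi) :
    pre lam l x ∈ Set.Icc (-xi) xi := by
  induction l with
  | nil => exact hx
  | cons b t ih =>
    have hle : √(pre lam t x + lam) ≤ xi :=
      (Real.sqrt_le_left hxi).mpr (by linarith [ih.2])
    have := Real.sqrt_nonneg (pre lam t x + lam)
    cases b <;> simp only [pre] <;> constructor <;> simp <;> linarith

lemma lt_quadMap {z : ℝ} (hz : xi < |z|) : xi < quadMap lam z := by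
  unfold quadMap
  nlinarith [sq_abs z, abs_nonneg z]

lemma lt_abs_iterate_quadMap {a : ℝ} (ha : xi < |a|) (n : ℕ) :
    xi < |(quadMap lam)^[n] a| := by
  induction n with
  | zero => exact ha
  | succ n ih =>
    rw [Function.iterate_succ_apply']
    exact (lt_quadMap hfix hxi ih).trans_le (le_abs_self _)

lemma sum_inv_pre_sub (hle : xi ≤ lam) (k : ℕ) {a x : ℝ} (ha : xi < |a|)
    (hx : x ∈ Set.Icc (-xi) xi) :
    ∑ s : Fin k → Bool, (pre lam (List.ofFn s) x - a)⁻¹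
      = 2 ^ k * (∏ j ∈ range k, (quadMap lam)^[j] a) * (x - (quadMap lam)^[k] a)⁻¹ := by
  induction k generalizing a with
  | zero => simp [pre]
  | succ k ih =>
    have hpair (u : ℝ) (hu : u ∈ Set.Icc (-xi) xi) :
        (√(u + lam) - a)⁻¹ + (-√(u + lam) - a)⁻¹ = 2 * a * (u - quadMap lam a)⁻¹ := by
      have hsq : √(u + lam) ^ 2 = u + lam := Real.sq_sqrt (by linarith [hu.1])
      have hne : √(u + lam) ^ 2 ≠ a ^ 2 := by
        rw [hsq]
        nlinarith [sq_abs a, hu.2]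
      rw [inv_sub_add_inv_neg_sub hne, hsq, quadMap]
      ring_nf
    rw [sum_pre_ofFn_succ lam x k fun y => (y - a)⁻¹]
    simp only [hpair _ (pre_mem_Icc hfix hxi _ hx)]
    rw [← mul_sum, ih ((lt_quadMap hfix hxi ha).trans_le (le_abs_self _)), prod_range_succ']
    simp only [Function.iterate_succ_apply, Function.iterate_zero_apply]
    ring

end InvariantInterval

lemma prod_iterate_quadMap_neg {lam xi a : ℝ} (hfix : xi ^ 2 = xi + lam) (hxi : 0 ≤ xi)
    (ha : a < 0) (habs : xi < |a|) (n : ℕ) : ∏ j ∈ range (n + 1), (quadMap lam)^[j] a < 0 := by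
  have hpos : 0 < ∏ j ∈ range n, (quadMap lam)^[j + 1] a := by
    refine prod_pos fun j _ => hxi.trans_lt ?_
    rw [Function.iterate_succ_apply']
    exact lt_quadMap hfix hxi (lt_abs_iterate_quadMap hfix hxi habs j)
  rw [prod_range_succ', Function.iterate_zero_apply]
  exact mul_neg_of_pos_of_neg hpos ha

lemma monotoneOn_mul_inv_sub {c A : ℝ} (hc : c ≤ 0) :
    MonotoneOn (fun x => c * (x - A)⁻¹) (Set.Iio A) := fun x hx y hy hxy =>
  mul_le_mul_of_nonpos_left
    ((inv_le_inv_of_neg (sub_neg.mpr hy) (sub_neg.mpr hx)).mpr (by linarith)) hc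

theorem stmt19 (lam : ℝ) (hlam : 2 < lam)
    (xi : ℝ) (hxi : xi = (1 + Real.sqrt (1 + 4 * lam)) / 2) :
    StrictAntiOn (fun x : ℝ => (x + lam)⁻¹) (Set.Icc (-xi) xi) ∧
    ∀ k : ℕ, 1 ≤ k → MonotoneOn
      (fun x : ℝ => ((2 : ℝ) ^ k)⁻¹ * ∑ s : Fin k → Bool, (pre lam (List.ofFn s) x + lam)⁻¹)
      (Set.Icc (-xi) xi) := by
  have hsqrt : √(1 + 4 * lam) ^ 2 = 1 + 4 * lam := Real.sq_sqrt (by linarith)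
  have hfix : xi ^ 2 = xi + lam := by rw [hxi]; nlinarith
  have hxi2 : 2 < xi := by rw [hxi]; nlinarith [Real.sqrt_nonneg (1 + 4 * lam)]
  have hxi0 : 0 ≤ xi := by linarith
  have hlt : xi < lam := by nlinarith
  refine ⟨fun x hx y _ hxy => inv_strictAnti₀ (by linarith [hx.1]) (by linarith), ?_⟩
  rintro k hk
  obtain ⟨n, rfl⟩ := Nat.exists_eq_add_of_le' hk
  have habs : xi < |-lam| := by rwa [abs_neg, abs_of_pos (by linarith)]
  have hpole : xi < (quadMap lam)^[n + 1] (-lam) := by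
    rw [Function.iterate_succ_apply']
    exact lt_quadMap hfix hxi0 (lt_abs_iterate_quadMap hfix hxi0 habs n)
  have hprod := prod_iterate_quadMap_neg hfix hxi0 (by linarith) habs n
  refine ((monotoneOn_mul_inv_sub hprod.le).mono
    fun x hx => hx.2.trans_lt hpole).congr fun x hx => ?_
  simp_rw [← sub_neg_eq_add _ lam]
  rw [sum_inv_pre_sub hfix hxi0 hlt.le (n + 1) habs hx, mul_assoc,
    inv_mul_cancel_left₀ (by positivity)]
end
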